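/- In λS, for every pure context E, variable k, closed term t with k ∉ FV(t), and evaluation context F, one-step reduction gives F[⟨E[Sk.⟨t⟩]⟩] →v F[⟨⟨t⟩{λx.⟨E[x]⟩/k}⟩] = F[⟨⟨t⟩⟩] and F[⟨E[Sk.t]⟩] →v F[⟨t⟩]; hence if ⟨⟨t⟩⟩ and ⟨t⟩ evaluate to the same values, F[⟨E[Sk.⟨t⟩]⟩] and F[⟨E[Sk.t]⟩] reduce to terms that evaluate to the same values (validating the axiom Sk.⟨t⟩ = Sk.t in context). -/

import Mathlib

/-- Terms of the calculus λS: variables, abstractions, applications,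
    shift (Sk.t) and reset (⟨t⟩). -/
inductive Tm : Type
  | var : ℕ → Tm
  | lam : ℕ → Tm → Tm
  | app : Tm → Tm → Tm
  | shift : ℕ → Tm → Tm
  | reset : Tm → Tm
deriving DecidableEq

namespace Tm

/-- Values are λ-abstractions. -/
def IsValue : Tm → Prop
  | lam _ _ => True
  | _ => False

/-- Free variables. -/
def fv : Tm → Finset ℕ
  | var x => {x}
  | lam x t => fv t \ {x}
  | app a b => fv a ∪ fv b
  | shift k t => fv t \ {k}
  | reset t => fv t

def Closed (t : Tm) : Prop := fv t = ∅

/-- Substitution t{v/x} (substituted terms are closed values, so no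
    capture can occur). -/
def subst : Tm → ℕ → Tm → Tm
  | var y, x, v => if y = x then v else var y
  | lam y t, x, v => if y = x then lam y t else lam y (subst t x v)
  | app a b, x, v => app (subst a x v) (subst b x v)
  | shift k t, x, v => if k = x then shift k t else shift k (subst t x v)
  | reset t, x, v => reset (subst t x v)

end Tm

/-- (Evaluation) contexts F ::= [] | v F | F t | ⟨F⟩, represented outside-in.
    Pure contexts E are those with no reset constructor. -/
inductive Ctx : Type
  | hole : Ctx
  | appR : Tm → Ctx → Ctx   -- v F
  | appL : Ctx → Tm → Ctx   -- F t
  | reset : Ctx → Ctx       -- ⟨F⟩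
deriving DecidableEq

namespace Ctx

def plug : Ctx → Tm → Tm
  | hole, t => t
  | appR v F, t => Tm.app v (F.plug t)
  | appL F u, t => Tm.app (F.plug t) u
  | reset F, t => Tm.reset (F.plug t)

/-- Well-formedness: in `v F` the term v must be a value. -/
def Wf : Ctx → Prop
  | hole => True
  | appR v F => v.IsValue ∧ F.Wf
  | appL F _ => F.Wf
  | reset F => F.Wf

/-- Pure contexts contain no reset around the hole. -/
def Pure : Ctx → Prop
  | hole => True
  | appR _ F => F.Pure
  | appL F _ => F.Pure
  | reset _ => False

def fv : Ctx → Finset ℕ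
  | hole => ∅
  | appR v F => v.fv ∪ F.fv
  | appL F u => F.fv ∪ u.fv
  | reset F => F.fv

/-- Context composition: (F.comp G)[t] = F[G[t]]. -/
def comp : Ctx → Ctx → Ctx
  | hole, G => G
  | appR v F, G => appR v (F.comp G)
  | appL F u, G => appL (F.comp G) u
  | reset F, G => reset (F.comp G)

end Ctx

/-- A canonical fresh variable not occurring in the finite set s. -/
def fresh (s : Finset ℕ) : ℕ := s.sup id + 1

/-- The reduction relation →v of λS. -/
inductive Red : Tm → Tm → Prop
  | beta (F : Ctx) (x : ℕ) (t v : Tm) :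
      F.Wf → v.IsValue →
      Red (F.plug (Tm.app (Tm.lam x t) v)) (F.plug (t.subst x v))
  | shift (F E : Ctx) (k : ℕ) (t : Tm) :
      F.Wf → E.Wf → E.Pure →
      Red (F.plug (Tm.reset (E.plug (Tm.shift k t))))
          (F.plug (Tm.reset (t.subst k
            (Tm.lam (fresh E.fv) (Tm.reset (E.plug (Tm.var (fresh E.fv))))))))
  | reset (F : Ctx) (v : Tm) :
      F.Wf → v.IsValue →
      Red (F.plug (Tm.reset v)) (F.plug v)

/-- A term is stuck if it is not a value and admits no reduction step. -/
def Stuck (t : Tm) : Prop := ¬ t.IsValue ∧ ∀ t', ¬ Red t t'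

/-- A normal form is a value or a stuck term. -/
def NormalForm (t : Tm) : Prop := t.IsValue ∨ Stuck t

/-- Reflexive-transitive closure of reduction. -/
def Steps : Tm → Tm → Prop := Relation.ReflTransGen Red

/-- Evaluation: t ⇓ t' when t →v* t' and t' is irreducible. -/
def Evals (t t' : Tm) : Prop := Steps t t' ∧ ∀ u, ¬ Red t' u

/-- Redexes: (λx.t) v, ⟨E[Sk.t]⟩ with E pure, and ⟨v⟩. -/
def IsRedex (r : Tm) : Prop :=
  (∃ x t v, Tm.IsValue v ∧ r = Tm.app (Tm.lam x t) v) ∨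
  (∃ E : Ctx, ∃ k t, E.Wf ∧ E.Pure ∧ r = Tm.reset (E.plug (Tm.shift k t))) ∨
  (∃ v, Tm.IsValue v ∧ r = Tm.reset v)

/-- Divergence: an infinite reduction sequence. -/
def Diverges (t : Tm) : Prop := ∃ f : ℕ → Tm, f 0 = t ∧ ∀ n, Red (f n) (f (n + 1))

/-- Ω = (λx.x x)(λx.x x). -/
def Omega : Tm :=
  Tm.app (Tm.lam 0 (Tm.app (Tm.var 0) (Tm.var 0)))
         (Tm.lam 0 (Tm.app (Tm.var 0) (Tm.var 0)))

/-- Arbitrary one-hole contexts C. -/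
inductive GCtx : Type
  | hole : GCtx
  | lam : ℕ → GCtx → GCtx
  | appL : GCtx → Tm → GCtx
  | appR : Tm → GCtx → GCtx
  | shift : ℕ → GCtx → GCtx
  | reset : GCtx → GCtx

def GCtx.plug : GCtx → Tm → Tm
  | hole, t => t
  | lam x C, t => Tm.lam x (C.plug t)
  | appL C u, t => Tm.app (C.plug t) u
  | appR u C, t => Tm.app u (C.plug t)
  | shift k C, t => Tm.shift k (C.plug t)
  | reset C, t => Tm.reset (C.plug t)

/-- Contextual equivalence for the relaxed semantics. -/
def CtxEquiv (t0 t1 : Tm) : Prop :=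
  ∀ C : GCtx, (C.plug t0).Closed → (C.plug t1).Closed →
    ((∃ v, v.IsValue ∧ Evals (C.plug t0) v) ↔ (∃ v, v.IsValue ∧ Evals (C.plug t1) v)) ∧
    ((∃ s, Stuck s ∧ Evals (C.plug t0) s) ↔ (∃ s, Stuck s ∧ Evals (C.plug t1) s))

/-- Contextual equivalence for the original (top-level reset) semantics. -/
def CtxEquivP (t0 t1 : Tm) : Prop :=
  ∀ C : GCtx, (Tm.reset (C.plug t0)).Closed → (Tm.reset (C.plug t1)).Closed →
    ((∃ v, v.IsValue ∧ Evals (Tm.reset (C.plug t0)) v) ↔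
     (∃ v, v.IsValue ∧ Evals (Tm.reset (C.plug t1)) v))

/-- The term-generating closure of a relation R on closed terms. -/
inductive TmClo (R : Tm → Tm → Prop) : Tm → Tm → Prop
  | base {t t'} : R t t' → TmClo R t t'
  | var (x : ℕ) : TmClo R (Tm.var x) (Tm.var x)
  | lam {t t'} (x : ℕ) : TmClo R t t' → TmClo R (Tm.lam x t) (Tm.lam x t')
  | app {a a' b b'} : TmClo R a a' → TmClo R b b' →
      TmClo R (Tm.app a b) (Tm.app a' b')
  | shift {t t'} (k : ℕ) : TmClo R t t' → TmClo R (Tm.shift k t) (Tm.shift k t')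
  | reset {t t'} : TmClo R t t' → TmClo R (Tm.reset t) (Tm.reset t')

/-!
Both reductions are single shift steps: the captured continuation `λx.⟨E[x]⟩` is substituted
for `k`, which does not occur in `t`.

For evaluation, the key fact is that `→v` is deterministic: a term decomposes in at most one way
as `F[r]` with `F` an evaluation context and `r` a redex. Evaluation is therefore invariant along
reduction. If `⟨⟨t⟩⟩` and `⟨t⟩` evaluate to a common `w`, then `F[⟨⟨t⟩⟩]` and `F[⟨t⟩]` both
reduce to `F[w]`; if neither evaluates, every reduct of `F[a]` is `F[a']` with `a'` reducible,
so neither plugged term evaluates.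
-/

theorem Tm.subst_eq_self_of_notMem_fv {v t : Tm} {x : ℕ} (hx : x ∉ t.fv) :
    t.subst x v = t := by
  induction t with
  | var y => simp_all [Tm.fv, Tm.subst, eq_comm]
  | lam y s ih | shift y s ih =>
      by_cases h : y = x
      · simp [Tm.subst, h]
      · simp only [Tm.fv, Finset.mem_sdiff, Finset.mem_singleton, not_and, not_not] at hx
        simp [Tm.subst, h, ih fun hm => h (hx hm).symm]
  | app a b iha ihb => simp_all [Tm.fv, Tm.subst]
  | reset s ih => simp_all [Tm.fv, Tm.subst]

theorem IsRedex.not_isValue {r : Tm} (h : IsRedex r) : ¬ r.IsValue := by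
  rcases h with ⟨_, _, _, _, rfl⟩ | ⟨_, _, _, _, _, rfl⟩ | ⟨_, _, rfl⟩ <;> simp [Tm.IsValue]

namespace Ctx

@[simp]
theorem comp_hole (F : Ctx) : F.comp hole = F := by
  induction F <;> simp_all [comp]

theorem plug_comp (F G : Ctx) (t : Tm) : (F.comp G).plug t = F.plug (G.plug t) := by
  induction F <;> simp_all [comp, plug]

theorem Wf.comp {F G : Ctx} (hF : F.Wf) (hG : G.Wf) : (F.comp G).Wf := by
  induction F <;> simp_all [Ctx.comp, Wf]

theorem Pure.of_comp {F G : Ctx} (h : (F.comp G).Pure) : G.Pure := by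
  induction F <;> simp_all [comp, Pure]

theorem isValue_of_isValue_plug {F : Ctx} {t : Tm} (h : (F.plug t).IsValue) : t.IsValue := by
  cases F <;> simp_all [plug, Tm.IsValue]

theorem eq_hole_of_plug_eq_lam {F : Ctx} {t : Tm} {x : ℕ} {s : Tm}
    (h : F.plug t = Tm.lam x s) : F = hole := by
  cases F <;> simp_all [plug]

theorem eq_hole_of_plug_eq_shift {F : Ctx} {t : Tm} {k : ℕ} {s : Tm}
    (h : F.plug t = Tm.shift k s) : F = hole := by
  cases F <;> simp_all [plug]

/-- Two decompositions of a term around non-values are nested: one context extends the other. -/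
theorem plug_eq_plug {F₁ F₂ : Ctx} {a b : Tm} (h₁ : F₁.Wf) (h₂ : F₂.Wf)
    (ha : ¬ a.IsValue) (hb : ¬ b.IsValue) (h : F₁.plug a = F₂.plug b) :
    (∃ G, G.Wf ∧ F₂ = F₁.comp G ∧ a = G.plug b) ∨
    (∃ G, G.Wf ∧ F₁ = F₂.comp G ∧ b = G.plug a) := by
  induction F₁ generalizing F₂ with
  | hole => exact .inl ⟨F₂, h₂, rfl, h⟩
  | appR v F ih =>
      cases F₂ with
      | hole => exact .inr ⟨_, h₁, rfl, h.symm⟩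
      | appR w F' =>
          obtain ⟨rfl, h'⟩ := by simpa only [plug, Tm.app.injEq] using h
          rcases ih h₁.2 h₂.2 h' with ⟨G, hG, rfl, rfl⟩ | ⟨G, hG, rfl, rfl⟩
          exacts [.inl ⟨G, hG, rfl, rfl⟩, .inr ⟨G, hG, rfl, rfl⟩]
      | appL F' u =>
          obtain ⟨hv, -⟩ := by simpa only [plug, Tm.app.injEq] using h
          exact absurd (isValue_of_isValue_plug (hv ▸ h₁.1)) hb
      | reset F' => simp [plug] at h
  | appL F u ih =>
      cases F₂ with
      | hole => exact .inr ⟨_, h₁, rfl, h.symm⟩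
      | appR w F' =>
          obtain ⟨hw, -⟩ := by simpa only [plug, Tm.app.injEq] using h
          exact absurd (isValue_of_isValue_plug (hw ▸ h₂.1)) ha
      | appL F' u' =>
          obtain ⟨h', rfl⟩ := by simpa only [plug, Tm.app.injEq] using h
          rcases ih (F₂ := F') h₁ h₂ h' with ⟨G, hG, rfl, rfl⟩ | ⟨G, hG, rfl, rfl⟩
          exacts [.inl ⟨G, hG, rfl, rfl⟩, .inr ⟨G, hG, rfl, rfl⟩]
      | reset F' => simp [plug] at h
  | reset F ih =>
      cases F₂ with
      | hole => exact .inr ⟨_, h₁, rfl, h.symm⟩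
      | appR | appL => simp [plug] at h
      | reset F' =>
          have h' : F.plug a = F'.plug b := by simpa only [plug, Tm.reset.injEq] using h
          rcases ih (F₂ := F') h₁ h₂ h' with ⟨G, hG, rfl, rfl⟩ | ⟨G, hG, rfl, rfl⟩
          exacts [.inl ⟨G, hG, rfl, rfl⟩, .inr ⟨G, hG, rfl, rfl⟩]

theorem Pure.not_isRedex_plug_shift {E : Ctx} (hE : E.Pure) (k : ℕ) (t : Tm) :
    ¬ IsRedex (E.plug (Tm.shift k t)) := by
  cases E with
  | hole => simp [IsRedex, plug]
  | appR w E =>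
      rintro (⟨_, _, v, hv, h⟩ | ⟨_, _, _, _, _, h⟩ | ⟨_, _, h⟩) <;> simp only [plug,
        Tm.app.injEq, reduceCtorEq] at h
      exact isValue_of_isValue_plug (h.2 ▸ hv)
  | appL E u =>
      rintro (⟨_, _, _, _, h⟩ | ⟨_, _, _, _, _, h⟩ | ⟨_, _, h⟩) <;> simp only [plug,
        Tm.app.injEq, reduceCtorEq] at h
      obtain rfl := eq_hole_of_plug_eq_lam h.1
      simp [plug] at h
  | reset => exact hE.elim

theorem eq_hole_of_isRedex_plug {G : Ctx} {b : Tm} (hG : G.Wf) (hGb : IsRedex (G.plug b))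
    (hb : IsRedex b) : G = hole := by
  cases G with
  | hole => rfl
  | appR w G =>
      rcases hGb with ⟨_, _, v, hv, h⟩ | ⟨_, _, _, _, _, h⟩ | ⟨_, _, h⟩ <;> simp only [plug,
        Tm.app.injEq, reduceCtorEq] at h
      exact absurd (isValue_of_isValue_plug (h.2 ▸ hv)) hb.not_isValue
  | appL G u =>
      rcases hGb with ⟨_, _, _, _, h⟩ | ⟨_, _, _, _, _, h⟩ | ⟨_, _, h⟩ <;> simp only [plug,
        Tm.app.injEq, reduceCtorEq] at h
      obtain rfl := eq_hole_of_plug_eq_lam h.1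
      exact absurd (by rw [show b = _ from h.1]; trivial) hb.not_isValue
  | reset G =>
      rcases hGb with ⟨_, _, _, _, h⟩ | ⟨E, k, t, hE, hEp, h⟩ | ⟨v, hv, h⟩ <;> simp only [plug,
        Tm.reset.injEq, reduceCtorEq] at h
      · rcases plug_eq_plug (a := Tm.shift k t) (F₂ := G) hE hG (by simp [Tm.IsValue])
          hb.not_isValue h.symm with ⟨H, -, rfl, hH⟩ | ⟨H, -, rfl, rfl⟩
        · obtain rfl := eq_hole_of_plug_eq_shift hH.symm
          exact absurd ((show Tm.shift k t = b from hH) ▸ hb) (by simp [IsRedex])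
        · exact absurd hb (hEp.of_comp.not_isRedex_plug_shift k t)
      · exact absurd (isValue_of_isValue_plug (h ▸ hv)) hb.not_isValue

theorem eq_and_eq_of_plug_eq_plug_of_isRedex {F₁ F₂ : Ctx} {r₁ r₂ : Tm} (h₁ : F₁.Wf)
    (h₂ : F₂.Wf) (hr₁ : IsRedex r₁) (hr₂ : IsRedex r₂) (h : F₁.plug r₁ = F₂.plug r₂) :
    F₁ = F₂ ∧ r₁ = r₂ := by
  rcases plug_eq_plug h₁ h₂ hr₁.not_isValue hr₂.not_isValue h with
    ⟨G, hG, rfl, rfl⟩ | ⟨G, hG, rfl, rfl⟩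
  · obtain rfl := eq_hole_of_isRedex_plug hG hr₁ hr₂
    simp [plug]
  · obtain rfl := eq_hole_of_isRedex_plug hG hr₂ hr₁
    simp [plug]

theorem eq_and_eq_of_plug_shift_eq {E₁ E₂ : Ctx} {k₁ k₂ : ℕ} {t₁ t₂ : Tm} (h₁ : E₁.Wf)
    (h₂ : E₂.Wf) (h : E₁.plug (Tm.shift k₁ t₁) = E₂.plug (Tm.shift k₂ t₂)) :
    E₁ = E₂ ∧ k₁ = k₂ ∧ t₁ = t₂ := by
  rcases plug_eq_plug h₁ h₂ (by simp [Tm.IsValue]) (by simp [Tm.IsValue]) h with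
    ⟨G, -, rfl, hG⟩ | ⟨G, -, rfl, hG⟩
  · obtain rfl := eq_hole_of_plug_eq_shift hG.symm
    simpa [plug] using hG
  · obtain rfl := eq_hole_of_plug_eq_shift hG.symm
    simpa [plug, eq_comm] using hG

end Ctx

/-- The contraction rules of `Red` at the root: `Red` is `Contract` under a well-formed context. -/
inductive Contract : Tm → Tm → Prop
  | beta (x : ℕ) (t v : Tm) : v.IsValue →
      Contract (Tm.app (Tm.lam x t) v) (t.subst x v)
  | shift (E : Ctx) (k : ℕ) (t : Tm) : E.Wf → E.Pure →
      Contract (Tm.reset (E.plug (Tm.shift k t)))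
        (Tm.reset (t.subst k
          (Tm.lam (fresh E.fv) (Tm.reset (E.plug (Tm.var (fresh E.fv)))))))
  | reset (v : Tm) : v.IsValue → Contract (Tm.reset v) v

namespace Contract

theorem isRedex {r c : Tm} (h : Contract r c) : IsRedex r := by
  cases h with
  | beta x t v hv => exact .inl ⟨x, t, v, hv, rfl⟩
  | shift E k t hE hEp => exact .inr (.inl ⟨E, k, t, hE, hEp, rfl⟩)
  | reset _ hv => exact .inr (.inr ⟨_, hv, rfl⟩)

theorem rightUnique : Relator.RightUnique Contract := by
  intro _ _ c₂ h₁ h₂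
  cases h₁ with
  | beta => cases h₂; rfl
  | shift E k t hE _ =>
      generalize hr : Tm.reset (E.plug (Tm.shift k t)) = r at h₂
      cases h₂ with
      | beta => cases hr
      | shift E' k' t' hE' _ =>
          obtain ⟨rfl, rfl, rfl⟩ :=
            Ctx.eq_and_eq_of_plug_shift_eq hE hE' (Tm.reset.inj hr)
          rfl
      | reset _ hv => exact absurd (Tm.reset.inj hr ▸ hv) Ctx.isValue_of_isValue_plug
  | reset _ hv =>
      cases h₂ with
      | shift => exact absurd hv Ctx.isValue_of_isValue_plug
      | reset => rfl

end Contract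

namespace Red

theorem of_contract {F : Ctx} {r c : Tm} (hF : F.Wf) (h : Contract r c) :
    Red (F.plug r) (F.plug c) := by
  cases h with
  | beta x t v hv => exact .beta F x t v hF hv
  | shift E k t hE hEp => exact .shift F E k t hF hE hEp
  | reset _ hv => exact .reset F _ hF hv

theorem exists_contract {s u : Tm} (h : Red s u) :
    ∃ (F : Ctx) (r c : Tm), F.Wf ∧ Contract r c ∧ s = F.plug r ∧ u = F.plug c := by
  cases h with
  | beta F x t v hF hv => exact ⟨F, _, _, hF, .beta x t v hv, rfl, rfl⟩
  | shift F E k t hF hE hEp => exact ⟨F, _, _, hF, .shift E k t hE hEp, rfl, rfl⟩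
  | reset F _ hF hv => exact ⟨F, _, _, hF, .reset _ hv, rfl, rfl⟩

theorem plug {a b : Tm} {F : Ctx} (hF : F.Wf) (h : Red a b) : Red (F.plug a) (F.plug b) := by
  obtain ⟨G, r, c, hG, hrc, rfl, rfl⟩ := exists_contract h
  simpa only [Ctx.plug_comp] using of_contract (hF.comp hG) hrc

theorem rightUnique : Relator.RightUnique Red := by
  intro s u₁ u₂ h₁ h₂
  obtain ⟨F₁, r₁, c₁, hF₁, hc₁, rfl, rfl⟩ := exists_contract h₁
  obtain ⟨F₂, r₂, c₂, hF₂, hc₂, h, rfl⟩ := exists_contract h₂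
  obtain ⟨rfl, rfl⟩ :=
    Ctx.eq_and_eq_of_plug_eq_plug_of_isRedex hF₁ hF₂ hc₁.isRedex hc₂.isRedex h
  rw [Contract.rightUnique hc₁ hc₂]

end Red

theorem Steps.plug {a b : Tm} {F : Ctx} (hF : F.Wf) (h : Steps a b) :
    Steps (F.plug a) (F.plug b) :=
  Relation.ReflTransGen.lift F.plug (fun _ _ => Red.plug hF) _ _ h

theorem Steps.evals_iff {a b : Tm} (h : Steps a b) (v : Tm) : Evals a v ↔ Evals b v := by
  refine ⟨fun ⟨hav, hv⟩ => ⟨?_, hv⟩, fun ⟨hbv, hv⟩ => ⟨h.trans hbv, hv⟩⟩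
  rcases Relation.ReflTransGen.total_of_right_unique Red.rightUnique h hav with hbv | hvb
  · exact hbv
  · rcases hvb.cases_head with rfl | ⟨c, hvc, -⟩
    exacts [.refl, absurd hvc (hv c)]

theorem not_evals_plug {a : Tm} {F : Ctx} (hF : F.Wf) (ha : ∀ v, ¬ Evals a v) (v : Tm) :
    ¬ Evals (F.plug a) v := by
  have reduces : ∀ a', Steps a a' → ∃ u, Red a' u := fun a' h => by
    by_contra! hnf
    exact ha a' ⟨h, hnf⟩
  have reducts : ∀ z, Steps (F.plug a) z → ∃ a', Steps a a' ∧ z = F.plug a' := by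
    intro z hz
    induction hz with
    | refl => exact ⟨a, .refl, rfl⟩
    | tail _ hstep ih =>
        obtain ⟨a', ha', rfl⟩ := ih
        obtain ⟨u, hu⟩ := reduces a' ha'
        exact ⟨u, ha'.tail hu, Red.rightUnique hstep (Red.plug hF hu)⟩
  rintro ⟨hv, hnf⟩
  obtain ⟨a', ha', rfl⟩ := reducts v hv
  obtain ⟨u, hu⟩ := reduces a' ha'
  exact hnf _ (Red.plug hF hu)

theorem evals_plug_congr {a b : Tm} {F : Ctx} (hF : F.Wf) (h : ∀ v, Evals a v ↔ Evals b v)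
    (v : Tm) : Evals (F.plug a) v ↔ Evals (F.plug b) v := by
  by_cases ha : ∃ w, Evals a w
  · obtain ⟨w, haw⟩ := ha
    rw [(haw.1.plug hF).evals_iff, ((h w).1 haw).1.plug hF |>.evals_iff]
  · push Not at ha
    have hb : ∀ w, ¬ Evals b w := fun w => by rw [← h]; exact ha w
    exact iff_of_false (not_evals_plug hF ha v) (not_evals_plug hF hb v)

theorem shift_reset_axiom_general (F E : Ctx) (k : ℕ) (t : Tm)
    (hF : F.Wf) (hE : E.Wf) (hEp : E.Pure) (hk : k ∉ t.fv) :
    Red (F.plug (Tm.reset (E.plug (Tm.shift k (Tm.reset t)))))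
        (F.plug (Tm.reset (Tm.reset t))) ∧
    Red (F.plug (Tm.reset (E.plug (Tm.shift k t))))
        (F.plug (Tm.reset t)) ∧
    ((∀ v, Evals (Tm.reset (Tm.reset t)) v ↔ Evals (Tm.reset t) v) →
      ∀ v, Evals (F.plug (Tm.reset (Tm.reset t))) v ↔
           Evals (F.plug (Tm.reset t)) v) := by
  refine ⟨?_, ?_, evals_plug_congr hF⟩
  · simpa [Tm.subst, Tm.subst_eq_self_of_notMem_fv hk] using
      Red.shift F E k (Tm.reset t) hF hE hEp
  · simpa [Tm.subst_eq_self_of_notMem_fv hk] using Red.shift F E k t hF hE hEp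

/-- F[⟨E[Sk.⟨t⟩]⟩] →v F[⟨⟨t⟩⟩] and F[⟨E[Sk.t]⟩] →v F[⟨t⟩]
    (since k ∉ FV(t)); hence if ⟨⟨t⟩⟩ and ⟨t⟩ evaluate to the same values,
    the two reducts evaluate to the same values in any F. -/
theorem shift_reset_axiom (F E : Ctx) (k : ℕ) (t : Tm)
    (hF : F.Wf) (hE : E.Wf) (hEp : E.Pure) (hc : t.Closed)
    (hEc : E.fv = ∅) (hk : k ∉ t.fv) :
    Red (F.plug (Tm.reset (E.plug (Tm.shift k (Tm.reset t)))))
        (F.plug (Tm.reset (Tm.reset t))) ∧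
    Red (F.plug (Tm.reset (E.plug (Tm.shift k t))))
        (F.plug (Tm.reset t)) ∧
    ((∀ v, Evals (Tm.reset (Tm.reset t)) v ↔ Evals (Tm.reset t) v) →
      ∀ v, Evals (F.plug (Tm.reset (Tm.reset t))) v ↔
           Evals (F.plug (Tm.reset t)) v) :=
  shift_reset_axiom_general F E k t hF hE hEp hk
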